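/- arXiv:2410.01330 — 3 statements merged into one kernel-verified Lean document; each statement's English description precedes it below -/
import Mathlib

section
/- Let N ≥ 1 and let M_t and M_r be N×N complex positive semidefinite Hermitian matrices, and let c_t > 0, c_r > 0 and P_A > 0 be real numbers. If there exists an N×N complex positive semidefinite Hermitian matrix V such that Re(Tr(V)) ≤ P_A, Re(Tr(V M_t)) ≥ c_t and Re(Tr(V M_r)) ≥ c_r, then there exists a vector v ∈ ℂ^N such that ‖v‖² ≤ P_A, Re(vᴴ M_t v) ≥ c_t and Re(vᴴ M_r v) ≥ c_r; that is, the feasibility system admits a rank-one solution V = v vᴴ. -/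
open scoped Matrix ComplexOrder

/-!
Writing `V = Bᴴ B`, every quantity in the feasibility system is a sum over the rows `b_j` of `B`:
`Re Tr(V M) = ∑ⱼ Re⟪M b̄ⱼ, b̄ⱼ⟫` and `Re Tr V = ∑ⱼ ‖b̄ⱼ‖²`. So it suffices that the cone
`{(‖x‖², Re⟪T x, x⟫, Re⟪S x, x⟫)}` is closed under addition, a homogeneous form of the
Toeplitz–Hausdorff theorem. Subtracting multiples of the identity and rotating the pair `(T, S)`
reduces this to finding a common nonzero zero of two forms `L`, `G` when `L` vanishes at `x` and
`y` and `G` changes sign between them; on a suitably phased arc from `x` to `c • y` the form `L`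
stays zero, so the intermediate value theorem applied to `G` gives it.
-/

open ComplexConjugate Complex
open scoped InnerProductSpace Real

theorem Complex.exists_ne_zero_re_mul_eq_zero_and_nonneg (β δ : ℂ) :
    ∃ c ≠ 0, (c * β).re = 0 ∧ 0 ≤ (c * δ).re := by
  obtain ⟨c, hc0, hcβ⟩ : ∃ c ≠ 0, (c * β).re = 0 := by
    by_cases hβ : β = 0
    · exact ⟨1, one_ne_zero, by simp [hβ]⟩
    · exact ⟨I * conj β, by simp [hβ], by simp [mul_assoc, conj_mul', ← ofReal_pow]⟩
  rcases le_total 0 (c * δ).re with h | h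
  · exact ⟨c, hc0, hcβ, h⟩
  · exact ⟨-c, neg_ne_zero.2 hc0, by simp [hcβ], by simpa using h⟩

namespace ContinuousLinearMap

variable {E : Type*} [NormedAddCommGroup E] [InnerProductSpace ℂ E]

theorem reApplyInnerSelf_smul_add_smul (T : E →L[ℂ] E) (a b : ℂ) (x y : E) :
    T.reApplyInnerSelf (a • x + b • y) = ‖a‖ ^ 2 * T.reApplyInnerSelf x +
      ‖b‖ ^ 2 * T.reApplyInnerSelf y + (conj a * b * (⟪T x, y⟫_ℂ + ⟪x, T y⟫_ℂ)).re := by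
  have expand : ⟪T (a • x + b • y), a • x + b • y⟫_ℂ = (‖a‖ ^ 2 : ℂ) * ⟪T x, x⟫_ℂ +
      (‖b‖ ^ 2 : ℂ) * ⟪T y, y⟫_ℂ + conj a * b * ⟪T x, y⟫_ℂ + conj (conj a * b * ⟪x, T y⟫_ℂ) := by
    simp only [map_add, map_smul, inner_add_left, inner_add_right, inner_smul_left,
      inner_smul_right, ← inner_conj_symm x, ← conj_mul', map_mul, conj_conj]
    ring
  simp only [reApplyInnerSelf_apply, RCLike.re_to_complex, expand, add_re, conj_re, mul_add,
    ← ofReal_pow, re_ofReal_mul]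
  ring

theorem one_reApplyInnerSelf (x : E) : (1 : E →L[ℂ] E).reApplyInnerSelf x = ‖x‖ ^ 2 := by
  rw [reApplyInnerSelf_apply, one_apply_eq_self, inner_self_eq_norm_sq]

theorem smul_add_smul_reApplyInnerSelf (a b : ℝ) (T S : E →L[ℂ] E) (x : E) :
    (a • T + b • S).reApplyInnerSelf x = a * T.reApplyInnerSelf x + b * S.reApplyInnerSelf x := by
  simp [reApplyInnerSelf_apply, inner_add_left, ← Complex.coe_smul, inner_smul_left]

theorem exists_ne_zero_reApplyInnerSelf_eq_zero_of_nonneg_of_nonpos {L G : E →L[ℂ] E} {x y : E}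
    (hx : x ≠ 0) (hy : y ≠ 0) (hLx : L.reApplyInnerSelf x = 0) (hLy : L.reApplyInnerSelf y = 0)
    (hGx : 0 ≤ G.reApplyInnerSelf x) (hGy : G.reApplyInnerSelf y ≤ 0) :
    ∃ v ≠ 0, L.reApplyInnerSelf v = 0 ∧ G.reApplyInnerSelf v = 0 := by
  -- The phase `c` kills the cross term of `L` and keeps that of `‖·‖²` nonnegative.
  obtain ⟨c, hc0, hcL, hc1⟩ := exists_ne_zero_re_mul_eq_zero_and_nonneg
    (⟪L x, y⟫_ℂ + ⟪x, L y⟫_ℂ) (⟪(1 : E →L[ℂ] E) x, y⟫_ℂ + ⟪x, (1 : E →L[ℂ] E) y⟫_ℂ)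
  set u : ℝ → E := fun s ↦ (Real.cos s : ℂ) • x + (Real.sin s * c) • y
  have hu (T : E →L[ℂ] E) (s : ℝ) : T.reApplyInnerSelf (u s) =
      Real.cos s ^ 2 * T.reApplyInnerSelf x + Real.sin s ^ 2 * ‖c‖ ^ 2 * T.reApplyInnerSelf y +
        Real.cos s * Real.sin s * (c * (⟪T x, y⟫_ℂ + ⟪x, T y⟫_ℂ)).re := by
    simp only [u, reApplyInnerSelf_smul_add_smul, conj_ofReal, norm_mul, norm_real,
      Real.norm_eq_abs, sq_abs, mul_pow, mul_assoc, re_ofReal_mul]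
  have hGu : ContinuousOn (fun s ↦ G.reApplyInnerSelf (u s)) (Set.Icc 0 (π / 2)) :=
    (G.reApplyInnerSelf_continuous.comp (by fun_prop)).continuousOn
  obtain ⟨s, hs, hGs⟩ : ∃ s ∈ Set.Icc 0 (π / 2), G.reApplyInnerSelf (u s) = 0 := by
    refine intermediate_value_Icc' (by positivity) hGu ⟨?_, ?_⟩
    · simpa [hu] using mul_nonpos_of_nonneg_of_nonpos (sq_nonneg ‖c‖) hGy
    · simpa [hu] using hGx
  refine ⟨u s, ?_, by simp [hu, hLx, hLy, hcL], hGs⟩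
  have hcos : 0 ≤ Real.cos s :=
    Real.cos_nonneg_of_mem_Icc ⟨by linarith [hs.1, Real.pi_pos], hs.2⟩
  have hsin : 0 ≤ Real.sin s :=
    Real.sin_nonneg_of_nonneg_of_le_pi hs.1 (by linarith [hs.2, Real.pi_pos])
  have hpos : 0 < (1 : E →L[ℂ] E).reApplyInnerSelf (u s) := by
    set a := ‖x‖ ^ 2
    set b := ‖c‖ ^ 2 * ‖y‖ ^ 2
    have hm : 0 < min a b := lt_min (by positivity) (by positivity)
    have hcross := mul_nonneg (mul_nonneg hcos hsin) hc1
    rw [hu, one_reApplyInnerSelf, one_reApplyInnerSelf, mul_assoc _ _ (‖y‖ ^ 2)]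
    nlinarith [Real.cos_sq_add_sin_sq s,
      mul_nonneg (sq_nonneg (Real.cos s)) (sub_nonneg.2 (min_le_left a b)),
      mul_nonneg (sq_nonneg (Real.sin s)) (sub_nonneg.2 (min_le_right a b))]
  rintro hus
  simp [hus, one_reApplyInnerSelf] at hpos

theorem exists_ne_zero_reApplyInnerSelf_eq_zero {A B : E →L[ℂ] E} {x y : E} (hx : x ≠ 0)
    (hy : y ≠ 0) (hA : A.reApplyInnerSelf x + A.reApplyInnerSelf y = 0)
    (hB : B.reApplyInnerSelf x + B.reApplyInnerSelf y = 0) :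
    ∃ v ≠ 0, A.reApplyInnerSelf v = 0 ∧ B.reApplyInnerSelf v = 0 := by
  set h := A.reApplyInnerSelf x
  set k := B.reApplyInnerSelf x
  have hAy := eq_neg_of_add_eq_zero_right hA
  have hBy := eq_neg_of_add_eq_zero_right hB
  by_cases hhk : h = 0 ∧ k = 0
  · exact ⟨x, hx, hhk⟩
  have hr : 0 < h ^ 2 + k ^ 2 := by
    rcases not_and_or.1 hhk with h0 | k0 <;> positivity
  -- Rotating `(A, B)` by the angle of `(h, k)` makes the first form vanish at `x` and `y`.
  obtain ⟨v, hv, hL, hG⟩ := exists_ne_zero_reApplyInnerSelf_eq_zero_of_nonneg_of_nonpos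
    (L := k • A + (-h) • B) (G := h • A + k • B) hx hy
    (by rw [smul_add_smul_reApplyInnerSelf]; ring)
    (by rw [smul_add_smul_reApplyInnerSelf, hAy, hBy]; ring)
    (by rw [smul_add_smul_reApplyInnerSelf]; nlinarith)
    (by rw [smul_add_smul_reApplyInnerSelf, hAy, hBy]; nlinarith)
  rw [smul_add_smul_reApplyInnerSelf] at hL hG
  refine ⟨v, hv, ?_, ?_⟩
  · have : (h ^ 2 + k ^ 2) * A.reApplyInnerSelf v = 0 := by linear_combination h * hG + k * hL
    exact (mul_eq_zero.1 this).resolve_left hr.ne'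
  · have : (h ^ 2 + k ^ 2) * B.reApplyInnerSelf v = 0 := by linear_combination k * hG - h * hL
    exact (mul_eq_zero.1 this).resolve_left hr.ne'

noncomputable def jointReApplyInnerSelf (T S : E →L[ℂ] E) (x : E) : ℝ × ℝ × ℝ :=
  (‖x‖ ^ 2, T.reApplyInnerSelf x, S.reApplyInnerSelf x)

@[simp]
theorem jointReApplyInnerSelf_zero (T S : E →L[ℂ] E) : jointReApplyInnerSelf T S 0 = 0 := by
  simp [jointReApplyInnerSelf, reApplyInnerSelf_apply]

theorem exists_jointReApplyInnerSelf_eq_add (T S : E →L[ℂ] E) (x y : E) :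
    ∃ v, jointReApplyInnerSelf T S v =
      jointReApplyInnerSelf T S x + jointReApplyInnerSelf T S y := by
  rcases eq_or_ne x 0 with rfl | hx
  · exact ⟨y, by simp⟩
  rcases eq_or_ne y 0 with rfl | hy
  · exact ⟨x, by simp⟩
  set p := ‖x‖ ^ 2 + ‖y‖ ^ 2
  have hp : 0 < p := by positivity
  set σT := T.reApplyInnerSelf x + T.reApplyInnerSelf y
  set σS := S.reApplyInnerSelf x + S.reApplyInnerSelf y
  -- A common zero of `p T - σT` and `p S - σS`, rescaled to squared norm `p`, does it.
  obtain ⟨v, hv, hTv, hSv⟩ := exists_ne_zero_reApplyInnerSelf_eq_zero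
    (A := p • T + (-σT) • 1) (B := p • S + (-σS) • 1) hx hy
    (by simp only [smul_add_smul_reApplyInnerSelf, one_reApplyInnerSelf]; ring)
    (by simp only [smul_add_smul_reApplyInnerSelf, one_reApplyInnerSelf]; ring)
  simp only [smul_add_smul_reApplyInnerSelf, one_reApplyInnerSelf] at hTv hSv
  refine ⟨((√p / ‖v‖ : ℝ) : ℂ) • v, ?_⟩
  have hscale : ‖((√p / ‖v‖ : ℝ) : ℂ)‖ ^ 2 = p / ‖v‖ ^ 2 := by
    rw [norm_real, Real.norm_eq_abs, sq_abs, div_pow, Real.sq_sqrt hp.le]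
  simp only [jointReApplyInnerSelf, reApplyInnerSelf_smul, norm_smul, mul_pow, hscale,
    Prod.mk_add_mk, Prod.mk.injEq]
  exact ⟨by field_simp; rfl, by field_simp; linarith, by field_simp; linarith⟩

noncomputable def jointNumericalRangeCone (T S : E →L[ℂ] E) : AddSubmonoid (ℝ × ℝ × ℝ) where
  carrier := Set.range (jointReApplyInnerSelf T S)
  add_mem' := by
    rintro _ _ ⟨x, rfl⟩ ⟨y, rfl⟩
    exact exists_jointReApplyInnerSelf_eq_add T S x y
  zero_mem' := ⟨0, jointReApplyInnerSelf_zero T S⟩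

end ContinuousLinearMap

namespace Matrix

variable {m n R 𝕜 : Type*} [Fintype m] [Fintype n]

open scoped MatrixOrder in
theorem PosSemidef.exists_eq_conjTranspose_mul_self [DecidableEq n] {V : Matrix n n ℂ}
    (hV : V.PosSemidef) : ∃ B : Matrix n n ℂ, V = Bᴴ * B := by
  obtain ⟨B, rfl⟩ := CStarAlgebra.nonneg_iff_eq_star_mul_self.mp hV.nonneg
  exact ⟨B, rfl⟩

theorem reApplyInnerSelf_toEuclideanCLM [RCLike 𝕜] [DecidableEq n] (M : Matrix n n 𝕜)
    (x : EuclideanSpace 𝕜 n) :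
    (toEuclideanCLM (𝕜 := 𝕜) M).reApplyInnerSelf x =
      RCLike.re (star (WithLp.ofLp x) ⬝ᵥ M *ᵥ WithLp.ofLp x) := by
  rw [ContinuousLinearMap.reApplyInnerSelf_apply, EuclideanSpace.inner_eq_star_dotProduct,
    ofLp_toEuclideanCLM, dotProduct_comm, star_dotProduct]
  exact RCLike.conj_re _

theorem trace_conjTranspose_mul_self_mul [CommSemiring R] [StarRing R] (B : Matrix m n R)
    (M : Matrix n n R) :
    (Bᴴ * B * M).trace = ∑ j, B j ⬝ᵥ M *ᵥ star (B j) := by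
  rw [Matrix.mul_assoc, trace_mul_comm, Matrix.mul_assoc, trace]
  refine Finset.sum_congr rfl fun j _ ↦ ?_
  simp [diag, mul_apply', mulVec, dotProduct]

theorem re_trace_conjTranspose_mul_self_mul [RCLike 𝕜] [DecidableEq n] (B : Matrix m n 𝕜)
    (M : Matrix n n 𝕜) : RCLike.re (Bᴴ * B * M).trace =
      ∑ j, (toEuclideanCLM (𝕜 := 𝕜) M).reApplyInnerSelf (WithLp.toLp 2 (star (B j))) := by
  simp [trace_conjTranspose_mul_self_mul, reApplyInnerSelf_toEuclideanCLM]

end Matrix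

theorem sdp_rank_one_feasibility_general
    (N : ℕ)
    (Mt Mr : Matrix (Fin N) (Fin N) ℂ)
    (ct cr PA : ℝ)
    (hfeas : ∃ V : Matrix (Fin N) (Fin N) ℂ, V.PosSemidef ∧
      V.trace.re ≤ PA ∧ ct ≤ ((V * Mt).trace).re ∧ cr ≤ ((V * Mr).trace).re) :
    ∃ v : Fin N → ℂ, (∑ i, ‖v i‖ ^ 2) ≤ PA ∧
      ct ≤ (star v ⬝ᵥ Mt.mulVec v).re ∧
      cr ≤ (star v ⬝ᵥ Mr.mulVec v).re := by
  obtain ⟨V, hV, hPA, hct, hcr⟩ := hfeas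
  obtain ⟨B, rfl⟩ := hV.exists_eq_conjTranspose_mul_self
  set T := Matrix.toEuclideanCLM (𝕜 := ℂ) Mt
  set S := Matrix.toEuclideanCLM (𝕜 := ℂ) Mr
  obtain ⟨x, hx⟩ : ∑ j, T.jointReApplyInnerSelf S (WithLp.toLp 2 (star (B j))) ∈
      T.jointNumericalRangeCone S :=
    AddSubmonoid.sum_mem _ fun j _ ↦ ⟨_, rfl⟩
  simp only [ContinuousLinearMap.jointReApplyInnerSelf, Prod.ext_iff, Prod.fst_sum,
    Prod.snd_sum] at hx
  refine ⟨WithLp.ofLp x, ?_, ?_, ?_⟩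
  · have htrace := Matrix.re_trace_conjTranspose_mul_self_mul B 1
    simp only [Matrix.mul_one, map_one, ContinuousLinearMap.one_reApplyInnerSelf] at htrace
    rwa [← EuclideanSpace.norm_sq_eq, hx.1, ← htrace]
  · exact hct.trans_eq <| (Matrix.re_trace_conjTranspose_mul_self_mul B Mt).trans <|
      hx.2.1.symm.trans (Matrix.reApplyInnerSelf_toEuclideanCLM Mt x)
  · exact hcr.trans_eq <| (Matrix.re_trace_conjTranspose_mul_self_mul B Mr).trans <|
      hx.2.2.symm.trans (Matrix.reApplyInnerSelf_toEuclideanCLM Mr x)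

/-- Theorem 1 of the paper: the feasibility system of the relaxed SDP
(downlink energy beamforming) admits a rank-one solution `V = v vᴴ`. -/
theorem sdp_rank_one_feasibility
    (N : ℕ) (hN : 1 ≤ N)
    (Mt Mr : Matrix (Fin N) (Fin N) ℂ)
    (hMt : Mt.PosSemidef) (hMr : Mr.PosSemidef)
    (ct cr PA : ℝ) (hct : 0 < ct) (hcr : 0 < cr) (hPA : 0 < PA)
    (hfeas : ∃ V : Matrix (Fin N) (Fin N) ℂ, V.PosSemidef ∧
      V.trace.re ≤ PA ∧ ct ≤ ((V * Mt).trace).re ∧ cr ≤ ((V * Mr).trace).re) :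
    ∃ v : Fin N → ℂ, (∑ i, ‖v i‖ ^ 2) ≤ PA ∧
      ct ≤ (star v ⬝ᵥ Mt.mulVec v).re ∧
      cr ≤ (star v ⬝ᵥ Mr.mulVec v).re :=
  sdp_rank_one_feasibility_general N Mt Mr ct cr PA hfeas
end

section
/- Let c ≥ 0 be a real number (including the case c = 1). The function f(A, B) = log₂(1 + c/(A·B)) is convex on the open positive orthant {(A, B) ∈ ℝ² : A > 0 and B > 0}. -/
open Real Set

private lemma gDeriv (c : ℝ) (hc : 0 ≤ c) (s : ℝ) :
    HasDerivAt (fun s : ℝ => Real.log (c + Real.exp s) - s)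
      (Real.exp s / (c + Real.exp s) - 1) s := by
  have hpos : 0 < c + Real.exp s := by positivity
  have h1 : HasDerivAt (fun s : ℝ => c + Real.exp s) (Real.exp s) s :=
    (Real.hasDerivAt_exp s).const_add c
  exact (h1.log hpos.ne').sub (hasDerivAt_id s)

private lemma gConvex (c : ℝ) (hc : 0 ≤ c) :
    ConvexOn ℝ Set.univ (fun s : ℝ => Real.log (c + Real.exp s) - s) := by
  have hderiv : deriv (fun s : ℝ => Real.log (c + Real.exp s) - s)
      = fun s => Real.exp s / (c + Real.exp s) - 1 :=
    funext fun s => (gDeriv c hc s).deriv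
  apply convexOn_of_deriv2_nonneg convex_univ
  · exact fun s _ => (gDeriv c hc s).continuousAt.continuousWithinAt
  · exact fun s _ => (gDeriv c hc s).differentiableAt.differentiableWithinAt
  · intro s _
    rw [hderiv]
    have hpos : 0 < c + Real.exp s := by positivity
    have : HasDerivAt (fun s : ℝ => Real.exp s / (c + Real.exp s) - 1)
        ((Real.exp s * (c + Real.exp s) - Real.exp s * Real.exp s) / (c + Real.exp s) ^ 2) s :=
      (((Real.hasDerivAt_exp s).div ((Real.hasDerivAt_exp s).const_add c) hpos.ne')).sub_const 1
    exact this.differentiableAt.differentiableWithinAt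
  · intro s _
    have hpos : 0 < c + Real.exp s := by positivity
    have h2 : HasDerivAt (fun s : ℝ => Real.exp s / (c + Real.exp s) - 1)
        ((Real.exp s * (c + Real.exp s) - Real.exp s * Real.exp s) / (c + Real.exp s) ^ 2) s :=
      (((Real.hasDerivAt_exp s).div ((Real.hasDerivAt_exp s).const_add c) hpos.ne')).sub_const 1
    have : deriv^[2] (fun s : ℝ => Real.log (c + Real.exp s) - s) s
        = (Real.exp s * (c + Real.exp s) - Real.exp s * Real.exp s) / (c + Real.exp s) ^ 2 := by
      simp only [Function.iterate_succ, Function.iterate_zero, Function.comp_apply, id_eq]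
      rw [hderiv]
      exact h2.deriv
    rw [this]
    have hnum : 0 ≤ Real.exp s * (c + Real.exp s) - Real.exp s * Real.exp s := by nlinarith [Real.exp_pos s]
    positivity

private lemma gAntitone (c : ℝ) (hc : 0 ≤ c) :
    Antitone (fun s : ℝ => Real.log (c + Real.exp s) - s) := by
  apply antitone_of_deriv_nonpos
  · exact fun s => (gDeriv c hc s).differentiableAt
  · intro s
    rw [(gDeriv c hc s).deriv]
    have hpos : 0 < c + Real.exp s := by positivity
    have : Real.exp s / (c + Real.exp s) ≤ 1 := by
      rw [div_le_one hpos]; linarith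
    linarith

/-- Joint convexity of `(A, B) ↦ log₂(1 + c/(A·B))` on the open positive orthant,
underlying the SCA step (30) of the paper. -/
theorem convexOn_logb_one_add_div_mul
    (c : ℝ) (hc : 0 ≤ c) :
    ConvexOn ℝ {p : ℝ × ℝ | 0 < p.1 ∧ 0 < p.2}
      (fun p : ℝ × ℝ => Real.logb 2 (1 + c / (p.1 * p.2))) := by
  set S : Set (ℝ × ℝ) := {p : ℝ × ℝ | 0 < p.1 ∧ 0 < p.2} with hS
  have hSconv : Convex ℝ S := by
    have : S = (Set.Ioi (0:ℝ)) ×ˢ (Set.Ioi (0:ℝ)) := by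
      ext p; simp [Set.mem_prod, hS]
    rw [this]
    exact (convex_Ioi 0).prod (convex_Ioi 0)
  set g : ℝ → ℝ := fun s => Real.log (c + Real.exp s) - s with hgdef
  set h : ℝ × ℝ → ℝ := fun p => Real.log p.1 + Real.log p.2 with hhdef
  -- concavity of h on S
  have hlog := strictConcaveOn_log_Ioi.concaveOn
  have hh : ConcaveOn ℝ S h := by
    constructor
    · exact hSconv
    · intro x hx y hy a b ha hb hab
      have h1 := hlog.2 (Set.mem_Ioi.2 hx.1) (Set.mem_Ioi.2 hy.1) ha hb hab
      have h2 := hlog.2 (Set.mem_Ioi.2 hx.2) (Set.mem_Ioi.2 hy.2) ha hb hab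
      simp only [hhdef, smul_eq_mul, Prod.fst_add, Prod.snd_add, Prod.smul_fst, Prod.smul_snd] at *
      linarith
  have hg := gConvex c hc
  have hg' := gAntitone c hc
  -- convexity of g ∘ h on S
  have key : ConvexOn ℝ S (fun p => g (h p)) := by
    constructor
    · exact hSconv
    · intro x hx y hy a b ha hb hab
      calc g (h (a • x + b • y)) ≤ g (a • h x + b • h y) :=
            hg' (hh.2 hx hy ha hb hab)
        _ ≤ a • g (h x) + b • g (h y) :=
            hg.2 (Set.mem_univ _) (Set.mem_univ _) ha hb hab
  have key2 : ConvexOn ℝ S (fun p => (Real.log 2)⁻¹ • g (h p)) :=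
    key.smul (by positivity)
  -- the target equals this function on S
  refine ⟨hSconv, fun x hx y hy a b ha hb hab => ?_⟩
  have heq : ∀ p : ℝ × ℝ, p ∈ S →
      Real.logb 2 (1 + c / (p.1 * p.2)) = (Real.log 2)⁻¹ • g (h p) := by
    intro p hp
    have h1 : 0 < p.1 := hp.1
    have h2 : 0 < p.2 := hp.2
    have hmul : 0 < p.1 * p.2 := mul_pos h1 h2
    have : 1 + c / (p.1 * p.2) = (c + p.1 * p.2) / (p.1 * p.2) := by
      field_simp; ring
    rw [Real.logb, this, Real.log_div (by positivity) hmul.ne',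
      hgdef, hhdef]
    simp only [smul_eq_mul]
    rw [← Real.log_mul h1.ne' h2.ne', Real.exp_log hmul]
    ring
  dsimp only
  rw [heq _ (hSconv hx hy ha hb hab), heq _ hx, heq _ hy]
  exact key2.2 hx hy ha hb hab
end

section
/- Let A, B, A⁰, B⁰ > 0 be real numbers. Then log₂(1 + 1/(A·B)) ≥ log₂(1 + 1/(A⁰·B⁰)) − (log₂ e)·(A − A⁰)/(A⁰·(1 + A⁰·B⁰)) − (log₂ e)·(B − B⁰)/(B⁰·(1 + A⁰·B⁰)). -/
/-- Key single-variable convex tangent lemma: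
`log(1+1/u) ≥ log(1+1/u0) - (log u - log u0)/(1+u0)` for `u, u0 > 0`. -/
lemma log_one_add_inv_tangent {u u0 : ℝ} (hu : 0 < u) (hu0 : 0 < u0) :
    Real.log (1 + 1 / u) ≥
      Real.log (1 + 1 / u0) - (Real.log u - Real.log u0) / (1 + u0) := by
  have h10 : (0:ℝ) < 1 + u0 := by linarith
  have h1u : (0:ℝ) < 1 + u := by linarith
  -- weighted AM-GM: (u/u0)^(u0/(1+u0)) ≤ (1+u)/(1+u0)
  have hgm := Real.geom_mean_le_arith_mean2_weighted
    (w₁ := 1 / (1 + u0)) (w₂ := u0 / (1 + u0)) (p₁ := 1) (p₂ := u / u0)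
    (by positivity) (by positivity) zero_le_one (by positivity)
    (by field_simp)
  rw [Real.one_rpow, one_mul] at hgm
  have harith : 1 / (1 + u0) * 1 + u0 / (1 + u0) * (u / u0) = (1 + u) / (1 + u0) := by
    field_simp
  rw [harith] at hgm
  have hlog : (u0 / (1 + u0)) * (Real.log u - Real.log u0) ≤
      Real.log (1 + u) - Real.log (1 + u0) := by
    have h1 : Real.log ((u / u0) ^ (u0 / (1 + u0))) ≤ Real.log ((1 + u) / (1 + u0)) :=
      Real.log_le_log (Real.rpow_pos_of_pos (by positivity) _) hgm
    rw [Real.log_rpow (by positivity), Real.log_div (by positivity) (by positivity),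
      Real.log_div (by positivity) (by positivity)] at h1
    linarith
  have e1 : Real.log (1 + 1 / u) = Real.log (1 + u) - Real.log u := by
    rw [show 1 + 1 / u = (1 + u) / u by field_simp; ring, Real.log_div (by positivity) (by positivity)]
  have e2 : Real.log (1 + 1 / u0) = Real.log (1 + u0) - Real.log u0 := by
    rw [show 1 + 1 / u0 = (1 + u0) / u0 by field_simp; ring,
      Real.log_div (by positivity) (by positivity)]
  rw [e1, e2, ge_iff_le, sub_le_iff_le_add]
  have key : Real.log u - Real.log u0 - (u0 / (1 + u0)) * (Real.log u - Real.log u0)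
      = (Real.log u - Real.log u0) / (1 + u0) := by
    field_simp
    ring
  linarith [key, hlog]

/-- First-order Taylor lower bound (30) for the jointly convex function
`(A, B) ↦ log₂(1 + 1/(A·B))` at the local point `(A⁰, B⁰)`. -/
theorem logb_one_add_inv_mul_ge_tangent
    (A B A0 B0 : ℝ) (hA : 0 < A) (hB : 0 < B) (hA0 : 0 < A0) (hB0 : 0 < B0) :
    Real.logb 2 (1 + 1 / (A * B)) ≥
      Real.logb 2 (1 + 1 / (A0 * B0))
        - Real.logb 2 (Real.exp 1) * (A - A0) / (A0 * (1 + A0 * B0))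
        - Real.logb 2 (Real.exp 1) * (B - B0) / (B0 * (1 + A0 * B0)) := by
  have hu : (0:ℝ) < A * B := mul_pos hA hB
  have hu0 : (0:ℝ) < A0 * B0 := mul_pos hA0 hB0
  have h10 : (0:ℝ) < 1 + A0 * B0 := by linarith
  have hl2 : (0:ℝ) < Real.log 2 := Real.log_pos (by norm_num)
  -- log inequalities for A and B
  have hlA : Real.log A - Real.log A0 ≤ (A - A0) / A0 := by
    have h := Real.log_le_sub_one_of_pos (div_pos hA hA0)
    rw [Real.log_div (ne_of_gt hA) (ne_of_gt hA0)] at h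
    have : A / A0 - 1 = (A - A0) / A0 := by field_simp
    linarith [this ▸ h]
  have hlB : Real.log B - Real.log B0 ≤ (B - B0) / B0 := by
    have h := Real.log_le_sub_one_of_pos (div_pos hB hB0)
    rw [Real.log_div (ne_of_gt hB) (ne_of_gt hB0)] at h
    have : B / B0 - 1 = (B - B0) / B0 := by field_simp
    linarith [this ▸ h]
  have hmain := log_one_add_inv_tangent hu hu0
  rw [Real.log_mul (ne_of_gt hA) (ne_of_gt hB),
    Real.log_mul (ne_of_gt hA0) (ne_of_gt hB0)] at hmain
  -- combine in natural log
  have key : Real.log (1 + 1 / (A * B)) ≥ Real.log (1 + 1 / (A0 * B0))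
      - (A - A0) / (A0 * (1 + A0 * B0)) - (B - B0) / (B0 * (1 + A0 * B0)) := by
    have hstep : (Real.log A + Real.log B - (Real.log A0 + Real.log B0)) / (1 + A0 * B0)
        ≤ (A - A0) / (A0 * (1 + A0 * B0)) + (B - B0) / (B0 * (1 + A0 * B0)) := by
      have hsum : Real.log A + Real.log B - (Real.log A0 + Real.log B0)
          ≤ (A - A0) / A0 + (B - B0) / B0 := by linarith
      calc (Real.log A + Real.log B - (Real.log A0 + Real.log B0)) / (1 + A0 * B0)
            ≤ ((A - A0) / A0 + (B - B0) / B0) / (1 + A0 * B0) := by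
              exact div_le_div_of_nonneg_right hsum h10.le
          _ = (A - A0) / (A0 * (1 + A0 * B0)) + (B - B0) / (B0 * (1 + A0 * B0)) := by
              field_simp
    linarith
  -- convert logb to log
  rw [ge_iff_le, Real.logb, Real.logb, Real.logb, Real.log_exp]
  have heq : Real.log (1 + 1 / (A0 * B0)) / Real.log 2
      - 1 / Real.log 2 * (A - A0) / (A0 * (1 + A0 * B0))
      - 1 / Real.log 2 * (B - B0) / (B0 * (1 + A0 * B0))
      = (Real.log (1 + 1 / (A0 * B0)) - (A - A0) / (A0 * (1 + A0 * B0))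
          - (B - B0) / (B0 * (1 + A0 * B0))) / Real.log 2 := by ring
  rw [heq]
  exact div_le_div_of_nonneg_right key hl2.le
end
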